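/- arXiv:2312.08345 — 4 statements merged into one kernel-verified Lean document; each statement's English description precedes it below -/
import Mathlib

section
/- Let d ≥ 2 be an integer and let S be a standard d-adic partition of [0,1]. If the open standard d-adic interval (a/d^n, (a+1)/d^n) (where n ≥ 0 and 0 ≤ a ≤ d^n − 1 are integers) has nonempty intersection with S, then both endpoints a/d^n and (a+1)/d^n belong to S. -/
/-- `x` and `y` are consecutive elements of the finite set `P`. -/
def ConsecPair (P : Finset ℝ) (x y : ℝ) : Prop :=
  x ∈ P ∧ y ∈ P ∧ x < y ∧ ∀ z ∈ P, z ≤ x ∨ y ≤ z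

/-- `[x, y]` is a standard `d`-adic interval, i.e. `x = a/d^k` and `y = (a+1)/d^k`
with `k ≥ 0` and `0 ≤ a ≤ d^k - 1`. -/
def IsStdIntEndpoints (d : ℕ) (x y : ℝ) : Prop :=
  ∃ k a : ℕ, a + 1 ≤ d ^ k ∧ x = (a : ℝ) / (d : ℝ) ^ k ∧ y = ((a : ℝ) + 1) / (d : ℝ) ^ k

/-- `S` is a standard `d`-adic partition of `[0,1]`: a finite subset of `[0,1]`
containing `0` and `1` such that any two consecutive elements are the endpoints of a
standard `d`-adic interval. -/
def IsStdPartition (d : ℕ) (S : Finset ℝ) : Prop :=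
  (0 : ℝ) ∈ S ∧ (1 : ℝ) ∈ S ∧ (∀ x ∈ S, (0:ℝ) ≤ x ∧ x ≤ 1) ∧
  ∀ x y : ℝ, ConsecPair S x y → IsStdIntEndpoints d x y

lemma cross1 (d n k a a' : ℕ) (hd : 2 ≤ d)
    (h1 : (a:ℝ)/(d:ℝ)^n < ((a':ℝ)+1)/(d:ℝ)^k)
    (h2 : ((a':ℝ)+1)/(d:ℝ)^k < ((a:ℝ)+1)/(d:ℝ)^n) :
    (a:ℝ)/(d:ℝ)^n ≤ (a':ℝ)/(d:ℝ)^k := by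
  have hd0 : (0:ℝ) < (d:ℝ) := by positivity
  have pn : (0:ℝ) < (d:ℝ)^n := by positivity
  have pk : (0:ℝ) < (d:ℝ)^k := by positivity
  rw [div_lt_div_iff₀ pn pk] at h1
  rw [div_lt_div_iff₀ pk pn] at h2
  have hn1 : a * d^k < (a'+1) * d^n := by exact_mod_cast h1
  have hn2 : (a'+1) * d^n < (a+1) * d^k := by exact_mod_cast h2
  rcases le_or_gt n k with h | h
  · obtain ⟨m, rfl⟩ := Nat.exists_eq_add_of_le h
    have hm : a * d^m ≤ a' := by
      have : a * d^m * d^n < (a'+1) * d^n := by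
        calc a * d^m * d^n = a * d^(n+m) := by ring
        _ < (a'+1) * d^n := hn1
      have := Nat.lt_of_mul_lt_mul_right this
      omega
    rw [div_le_div_iff₀ pn pk]
    have : (a:ℝ) * d^m ≤ a' := by exact_mod_cast hm
    calc (a:ℝ) * d^(n+m) = (a * d^m) * d^n := by ring
    _ ≤ (a':ℝ) * d^n := by
        apply mul_le_mul_of_nonneg_right this (le_of_lt pn)
  · obtain ⟨m, rfl⟩ := Nat.exists_eq_add_of_le h.le
    exfalso
    have h1' : a < (a'+1) * d^m := by
      have : a * d^k < ((a'+1) * d^m) * d^k := by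
        calc a * d^k < (a'+1) * d^(k+m) := hn1
        _ = ((a'+1) * d^m) * d^k := by ring
      exact Nat.lt_of_mul_lt_mul_right this
    have h2' : (a'+1) * d^m < a + 1 := by
      have : ((a'+1) * d^m) * d^k < (a+1) * d^k := by
        calc ((a'+1) * d^m) * d^k = (a'+1) * d^(k+m) := by ring
        _ < (a+1) * d^k := hn2
      exact Nat.lt_of_mul_lt_mul_right this
    omega

lemma cross2 (d n k a a' : ℕ) (hd : 2 ≤ d)
    (h1 : (a:ℝ)/(d:ℝ)^n < (a':ℝ)/(d:ℝ)^k)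
    (h2 : (a':ℝ)/(d:ℝ)^k < ((a:ℝ)+1)/(d:ℝ)^n) :
    ((a':ℝ)+1)/(d:ℝ)^k ≤ ((a:ℝ)+1)/(d:ℝ)^n := by
  have pn : (0:ℝ) < (d:ℝ)^n := by positivity
  have pk : (0:ℝ) < (d:ℝ)^k := by positivity
  rw [div_lt_div_iff₀ pn pk] at h1
  rw [div_lt_div_iff₀ pk pn] at h2
  have hn1 : a * d^k < a' * d^n := by exact_mod_cast h1
  have hn2 : a' * d^n < (a+1) * d^k := by exact_mod_cast h2
  rcases le_or_gt n k with h | h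
  · obtain ⟨m, rfl⟩ := Nat.exists_eq_add_of_le h
    have hm : a' + 1 ≤ (a+1) * d^m := by
      have : a' * d^n < ((a+1) * d^m) * d^n := by
        calc a' * d^n < (a+1) * d^(n+m) := hn2
        _ = ((a+1) * d^m) * d^n := by ring
      have := Nat.lt_of_mul_lt_mul_right this
      omega
    rw [div_le_div_iff₀ pk pn]
    have : (a':ℝ) + 1 ≤ ((a:ℝ)+1) * d^m := by exact_mod_cast hm
    calc ((a':ℝ)+1) * d^n ≤ (((a:ℝ)+1) * d^m) * d^n :=
        mul_le_mul_of_nonneg_right this (le_of_lt pn)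
    _ = ((a:ℝ)+1) * d^(n+m) := by ring
  · obtain ⟨m, rfl⟩ := Nat.exists_eq_add_of_le h.le
    exfalso
    have h1' : a < a' * d^m := by
      have : a * d^k < (a' * d^m) * d^k := by
        calc a * d^k < a' * d^(k+m) := hn1
        _ = (a' * d^m) * d^k := by ring
      exact Nat.lt_of_mul_lt_mul_right this
    have h2' : a' * d^m < a + 1 := by
      have : (a' * d^m) * d^k < (a+1) * d^k := by
        calc (a' * d^m) * d^k = a' * d^(k+m) := by ring
        _ < (a+1) * d^k := hn2
      exact Nat.lt_of_mul_lt_mul_right this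
    omega

open Classical in
lemma left_mem (d : ℕ) (hd : 2 ≤ d) (S : Finset ℝ) (hS : IsStdPartition d S) (n a : ℕ) :
    ∀ m : ℕ, ∀ s ∈ S, (S.filter (· < s)).card ≤ m →
      (a:ℝ)/(d:ℝ)^n < s → s < ((a:ℝ)+1)/(d:ℝ)^n → (a:ℝ)/(d:ℝ)^n ∈ S := by
  intro m
  induction m with
  | zero =>
    intro s hs hcard h1 h2
    exfalso
    have hA0 : (0:ℝ) ≤ (a:ℝ)/(d:ℝ)^n := by positivity
    have h0 : (0:ℝ) ∈ S.filter (· < s) := by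
      simp only [Finset.mem_filter]
      exact ⟨hS.1, lt_of_le_of_lt hA0 h1⟩
    have := Finset.card_pos.mpr ⟨_, h0⟩
    omega
  | succ m ih =>
    intro s hs hcard h1 h2
    have hA0 : (0:ℝ) ≤ (a:ℝ)/(d:ℝ)^n := by positivity
    have h0 : (0:ℝ) ∈ S.filter (· < s) := by
      simp only [Finset.mem_filter]
      exact ⟨hS.1, lt_of_le_of_lt hA0 h1⟩
    have hne : (S.filter (· < s)).Nonempty := ⟨_, h0⟩
    set x := (S.filter (· < s)).max' hne with hxdef
    have hxmem : x ∈ S.filter (· < s) := Finset.max'_mem _ hne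
    have hxS : x ∈ S := (Finset.mem_filter.mp hxmem).1
    have hxs : x < s := (Finset.mem_filter.mp hxmem).2
    have hcons : ConsecPair S x s := by
      refine ⟨hxS, hs, hxs, fun z hz => ?_⟩
      by_cases h : z < s
      · left
        have hzm : z ∈ S.filter (· < s) := Finset.mem_filter.mpr ⟨hz, h⟩
        exact Finset.le_max' _ z hzm
      · right; linarith [not_lt.mp h]
    obtain ⟨k, a', hk, hx, hsv⟩ := hS.2.2.2 x s hcons
    have hAx : (a:ℝ)/(d:ℝ)^n ≤ x := by
      rw [hx]
      exact cross1 d n k a a' hd (by rw [← hsv]; exact h1) (by rw [← hsv]; exact h2)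
    rcases eq_or_lt_of_le hAx with heq | hlt
    · rwa [heq]
    · have hsub : S.filter (· < x) ⊂ S.filter (· < s) := by
        refine Finset.ssubset_iff_of_subset ?_ |>.mpr ⟨x, hxmem, by simp⟩
        intro z hz
        simp only [Finset.mem_filter] at hz ⊢
        exact ⟨hz.1, hz.2.trans hxs⟩
      have : (S.filter (· < x)).card < (S.filter (· < s)).card := Finset.card_lt_card hsub
      exact ih x hxS (by omega) hlt (hxs.trans h2)

open Classical in
lemma right_mem (d : ℕ) (hd : 2 ≤ d) (S : Finset ℝ) (hS : IsStdPartition d S) (n a : ℕ)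
    (ha : a + 1 ≤ d ^ n) :
    ∀ m : ℕ, ∀ s ∈ S, (S.filter (s < ·)).card ≤ m →
      (a:ℝ)/(d:ℝ)^n < s → s < ((a:ℝ)+1)/(d:ℝ)^n → ((a:ℝ)+1)/(d:ℝ)^n ∈ S := by
  intro m
  induction m with
  | zero =>
    intro s hs hcard h1 h2
    exfalso
    have pn : (0:ℝ) < (d:ℝ)^n := by positivity
    have hB1 : ((a:ℝ)+1)/(d:ℝ)^n ≤ 1 := by
      rw [div_le_one pn]
      exact_mod_cast ha
    have h0 : (1:ℝ) ∈ S.filter (s < ·) := by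
      simp only [Finset.mem_filter]
      exact ⟨hS.2.1, lt_of_lt_of_le h2 hB1⟩
    have := Finset.card_pos.mpr ⟨_, h0⟩
    omega
  | succ m ih =>
    intro s hs hcard h1 h2
    have pn : (0:ℝ) < (d:ℝ)^n := by positivity
    have hB1 : ((a:ℝ)+1)/(d:ℝ)^n ≤ 1 := by
      rw [div_le_one pn]
      exact_mod_cast ha
    have h0 : (1:ℝ) ∈ S.filter (s < ·) := by
      simp only [Finset.mem_filter]
      exact ⟨hS.2.1, lt_of_lt_of_le h2 hB1⟩
    have hne : (S.filter (s < ·)).Nonempty := ⟨_, h0⟩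
    set y := (S.filter (s < ·)).min' hne with hydef
    have hymem : y ∈ S.filter (s < ·) := Finset.min'_mem _ hne
    have hyS : y ∈ S := (Finset.mem_filter.mp hymem).1
    have hsy : s < y := (Finset.mem_filter.mp hymem).2
    have hcons : ConsecPair S s y := by
      refine ⟨hs, hyS, hsy, fun z hz => ?_⟩
      by_cases h : s < z
      · right
        have hzm : z ∈ S.filter (s < ·) := Finset.mem_filter.mpr ⟨hz, h⟩
        exact Finset.min'_le _ z hzm
      · left; linarith [not_lt.mp h]
    obtain ⟨k, a', hk, hsv, hy⟩ := hS.2.2.2 s y hcons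
    have hyB : y ≤ ((a:ℝ)+1)/(d:ℝ)^n := by
      rw [hy]
      exact cross2 d n k a a' hd (by rw [← hsv]; exact h1) (by rw [← hsv]; exact h2)
    rcases eq_or_lt_of_le hyB with heq | hlt
    · rwa [← heq]
    · have hsub : S.filter (y < ·) ⊂ S.filter (s < ·) := by
        refine Finset.ssubset_iff_of_subset ?_ |>.mpr ⟨y, hymem, by simp⟩
        intro z hz
        simp only [Finset.mem_filter] at hz ⊢
        exact ⟨hz.1, hsy.trans hz.2⟩
      have : (S.filter (y < ·)).card < (S.filter (s < ·)).card := Finset.card_lt_card hsub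
      exact ih y hyS (by omega) (h1.trans hsy) hlt

/-- If the open standard `d`-adic interval `(a/d^n, (a+1)/d^n)` meets a standard
`d`-adic partition `S`, then both of its endpoints belong to `S`. -/
theorem stmt0 (d : ℕ) (hd : 2 ≤ d) (S : Finset ℝ) (hS : IsStdPartition d S)
    (n a : ℕ) (ha : a + 1 ≤ d ^ n)
    (hmeet : ∃ s ∈ S, (a : ℝ) / (d : ℝ) ^ n < s ∧ s < ((a : ℝ) + 1) / (d : ℝ) ^ n) :
    (a : ℝ) / (d : ℝ) ^ n ∈ S ∧ ((a : ℝ) + 1) / (d : ℝ) ^ n ∈ S := by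
  classical
  obtain ⟨s, hs, h1, h2⟩ := hmeet
  exact ⟨left_mem d hd S hS n a _ s hs le_rfl h1 h2,
    right_mem d hd S hS n a ha _ s hs le_rfl h1 h2⟩
end

section
/- Let d ≥ 2 be an integer and let S be a standard d-adic partition of [0,1]. If b/d^k ∈ S where b, k are nonnegative integers with b not divisible by d, then S ∩ (0,1) contains at least k elements. -/
lemma natCast_div_pow_eq_of_le {d j m : ℕ} (hd : 0 < d) (hjm : j ≤ m) (c : ℕ) :
    (c : ℝ) / (d : ℝ) ^ j = ((c * d ^ (m - j) : ℕ) : ℝ) / (d : ℝ) ^ m := by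
  have hd' : (d : ℝ) ≠ 0 := by exact_mod_cast hd.ne'
  obtain ⟨e, rfl⟩ := Nat.exists_eq_add_of_le hjm
  rw [div_eq_div_iff (pow_ne_zero _ hd') (pow_ne_zero _ hd'), Nat.add_sub_cancel_left]
  push_cast
  ring

lemma not_lt_natCast_div_pow_lt {d j m : ℕ} (hd : 0 < d) (hjm : j ≤ m) (a c : ℕ) :
    ¬ ((a : ℝ) / (d : ℝ) ^ m < c / (d : ℝ) ^ j ∧
      (c : ℝ) / (d : ℝ) ^ j < (a + 1) / (d : ℝ) ^ m) := by
  rintro ⟨hlo, hhi⟩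
  have hpow : (0 : ℝ) < (d : ℝ) ^ m := by positivity
  rw [natCast_div_pow_eq_of_le hd hjm, div_lt_div_iff_of_pos_right hpow] at hlo hhi
  have hlo' : a < c * d ^ (m - j) := by exact_mod_cast hlo
  have hhi' : c * d ^ (m - j) < a + 1 := by exact_mod_cast hhi
  omega

lemma isStdIntEndpoints_natCast_div_pow {d k a : ℕ} (ha : a + 1 ≤ d ^ k) :
    IsStdIntEndpoints d ((a : ℝ) / (d : ℝ) ^ k) (((a : ℝ) + 1) / (d : ℝ) ^ k) :=
  ⟨k, a, ha, rfl, rfl⟩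

namespace IsStdIntEndpoints

variable {d : ℕ} {x y u v : ℝ}

lemma nonneg (h : IsStdIntEndpoints d x y) : 0 ≤ x := by
  obtain ⟨k, a, -, rfl, -⟩ := h
  positivity

lemma le_one (h : IsStdIntEndpoints d x y) : y ≤ 1 := by
  obtain ⟨k, a, ha, -, rfl⟩ := h
  have ha' : (a : ℝ) + 1 ≤ (d : ℝ) ^ k := by exact_mod_cast ha
  exact div_le_one_of_le₀ ha' (by positivity)

lemma nested_of_overlap_of_le {m j a c : ℕ} (hd : 0 < d) (hjm : j ≤ m)
    (hxv : (a : ℝ) / (d : ℝ) ^ m < (c + 1) / (d : ℝ) ^ j)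
    (huy : (c : ℝ) / (d : ℝ) ^ j < (a + 1) / (d : ℝ) ^ m) :
    (c : ℝ) / (d : ℝ) ^ j ≤ a / (d : ℝ) ^ m ∧
      ((a : ℝ) + 1) / (d : ℝ) ^ m ≤ (c + 1) / (d : ℝ) ^ j := by
  have hc := not_lt_natCast_div_pow_lt hd hjm a c
  have hc' := not_lt_natCast_div_pow_lt hd hjm a (c + 1)
  push_cast at hc'
  constructor <;> by_contra! h
  · exact hc ⟨h, huy⟩
  · exact hc' ⟨hxv, h⟩

lemma nested_of_overlap (hd : 0 < d) (h₁ : IsStdIntEndpoints d x y)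
    (h₂ : IsStdIntEndpoints d u v) (hxv : x < v) (huy : u < y) :
    (x ≤ u ∧ v ≤ y) ∨ (u ≤ x ∧ y ≤ v) := by
  obtain ⟨m, a, -, rfl, rfl⟩ := h₁
  obtain ⟨j, c, -, rfl, rfl⟩ := h₂
  rcases le_total j m with hjm | hmj
  · exact Or.inr (nested_of_overlap_of_le hd hjm hxv huy)
  · exact Or.inl (nested_of_overlap_of_le hd hmj huy hxv)

end IsStdIntEndpoints

def HasExactLevel (d j : ℕ) (x : ℝ) : Prop :=
  ∃ c : ℕ, ¬ d ∣ c ∧ x = c / (d : ℝ) ^ j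

namespace HasExactLevel

variable {d i j : ℕ} {x : ℝ}

lemma le (hd : 0 < d) (hi : HasExactLevel d i x) (hj : HasExactLevel d j x) : i ≤ j := by
  obtain ⟨c, hc, rfl⟩ := hi
  obtain ⟨c', -, hx⟩ := hj
  by_contra! hji
  rw [natCast_div_pow_eq_of_le hd hji.le c',
    div_left_inj' (pow_ne_zero _ (by exact_mod_cast hd.ne')), Nat.cast_inj] at hx
  exact hc (hx ▸ dvd_mul_of_dvd_right (dvd_pow_self d (Nat.sub_ne_zero_of_lt hji)) c')

lemma unique (hd : 0 < d) (hi : HasExactLevel d i x) (hj : HasExactLevel d j x) : i = j :=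
  le_antisymm (hi.le hd hj) (hj.le hd hi)

lemma mem_Ioo (hd : 0 < d) (hj : 1 ≤ j) (h : HasExactLevel d j x)
    (hx : x ∈ Set.Icc 0 1) : x ∈ Set.Ioo 0 1 := by
  obtain ⟨c, hc, rfl⟩ := h
  have hpos : (0 : ℝ) < (d : ℝ) ^ j := by positivity
  refine ⟨hx.1.lt_of_ne' (div_ne_zero ?_ hpos.ne'), hx.2.lt_of_ne fun h => hc ?_⟩
  · exact Nat.cast_ne_zero.2 fun h => hc (h ▸ dvd_zero d)
  · rw [div_eq_one_iff_eq hpos.ne'] at h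
    rw [show c = d ^ j by exact_mod_cast h]
    exact dvd_pow_self d (by omega)

end HasExactLevel

lemma Finset.exists_consecPair_of_monotone (S : Finset ℝ) {p : ℝ → Prop} (hp : Monotone p)
    {a b : ℝ} (ha : a ∈ S) (hb : b ∈ S) (hpa : ¬ p a) (hpb : p b) :
    ∃ y z, ConsecPair S y z ∧ ¬ p y ∧ p z := by
  classical
  have hlo : (S.filter (¬ p ·)).Nonempty := ⟨a, Finset.mem_filter.2 ⟨ha, hpa⟩⟩
  have hhi : (S.filter p).Nonempty := ⟨b, Finset.mem_filter.2 ⟨hb, hpb⟩⟩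
  obtain ⟨hyS, hy⟩ := Finset.mem_filter.1 (Finset.max'_mem _ hlo)
  obtain ⟨hzS, hz⟩ := Finset.mem_filter.1 (Finset.min'_mem _ hhi)
  refine ⟨_, _, ⟨hyS, hzS, lt_of_not_ge fun h => hy (hp h hz), fun s hs => ?_⟩, hy, hz⟩
  by_cases hps : p s
  · exact Or.inr (Finset.min'_le _ s (Finset.mem_filter.2 ⟨hs, hps⟩))
  · exact Or.inl (Finset.le_max' _ s (Finset.mem_filter.2 ⟨hs, hps⟩))

namespace IsStdPartition

variable {d : ℕ} {S : Finset ℝ} {x : ℝ}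

lemma mem_of_lt_of_lt (hd : 0 < d) (hS : IsStdPartition d S) {L R : ℝ}
    (hLR : IsStdIntEndpoints d L R) (hx : x ∈ S) (hLx : L < x) (hxR : x < R) :
    L ∈ S ∧ R ∈ S := by
  obtain ⟨h0, h1, -, hcons⟩ := hS
  constructor
  · obtain ⟨y, z, hyz, hyL, hLz⟩ := S.exists_consecPair_of_monotone (p := (L < ·))
      (fun _ _ h h' => h'.trans_le h) h0 hx hLR.nonneg.not_gt hLx
    replace hyL := not_lt.1 hyL
    have hzx : z ≤ x := (hyz.2.2.2 x hx).resolve_left (by linarith)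
    rcases (hcons y z hyz).nested_of_overlap hd hLR (by linarith) hLz with ⟨-, hRz⟩ | ⟨hLy, -⟩
    · linarith
    · exact le_antisymm hyL hLy ▸ hyz.1
  · obtain ⟨y, z, hyz, hyR, hRz⟩ := S.exists_consecPair_of_monotone (p := (R ≤ ·))
      (fun _ _ h h' => h'.trans h) hx h1 hxR.not_ge hLR.le_one
    replace hyR := not_le.1 hyR
    have hxy : x ≤ y := (hyz.2.2.2 x hx).resolve_right (by linarith)
    rcases (hcons y z hyz).nested_of_overlap hd hLR hyR (by linarith) with ⟨hyL, -⟩ | ⟨-, hzR⟩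
    · linarith
    · exact le_antisymm hzR hRz ▸ hyz.2.1

lemma exists_hasExactLevel_of_succ (hd : 0 < d) (hS : IsStdPartition d S) (hx : x ∈ S)
    {j : ℕ} (h : HasExactLevel d (j + 1) x) : ∃ y ∈ S, HasExactLevel d j y := by
  obtain ⟨c, hc, rfl⟩ := h
  have hpos : (0 : ℝ) < (d : ℝ) ^ j := by positivity
  have hcle : c ≤ d ^ (j + 1) := by
    have := (hS.2.2.1 _ hx).2
    rw [div_le_one (by positivity)] at this
    exact_mod_cast this
  have hclt : c < d ^ j * d :=
    pow_succ d j ▸ hcle.lt_of_ne fun h => hc (h ▸ dvd_pow_self d j.succ_ne_zero)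
  set q := c / d
  have hq : q + 1 ≤ d ^ j := (Nat.div_lt_iff_lt_mul hd).2 hclt
  have hlo : q * d < c :=
    (Nat.div_mul_le_self c d).lt_of_ne fun h => hc (h ▸ dvd_mul_left d q)
  have hhi : c < (q + 1) * d := by rw [add_one_mul]; exact Nat.lt_div_mul_add hd
  have hL : (q : ℝ) / (d : ℝ) ^ j < c / (d : ℝ) ^ (j + 1) := by
    rw [pow_succ', ← div_div, div_lt_div_iff_of_pos_right hpos, lt_div_iff₀ (by positivity)]
    exact_mod_cast hlo
  have hR : (c : ℝ) / (d : ℝ) ^ (j + 1) < (q + 1) / (d : ℝ) ^ j := by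
    rw [pow_succ', ← div_div, div_lt_div_iff_of_pos_right hpos, div_lt_iff₀ (by positivity)]
    exact_mod_cast hhi
  obtain ⟨hLmem, hRmem⟩ :=
    hS.mem_of_lt_of_lt hd (isStdIntEndpoints_natCast_div_pow hq) hx hL hR
  by_cases hdq : d ∣ q
  · refine ⟨_, hRmem, q + 1, fun h => hc ?_, by push_cast; rfl⟩
    rw [Nat.dvd_one.1 ((Nat.dvd_add_right hdq).1 h)]
    exact one_dvd c
  · exact ⟨_, hLmem, q, hdq, rfl⟩

lemma exists_hasExactLevel_of_le (hd : 0 < d) (hS : IsStdPartition d S) (hx : x ∈ S)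
    {k : ℕ} (h : HasExactLevel d k x) {j : ℕ} (hjk : j ≤ k) :
    ∃ y ∈ S, HasExactLevel d j y := by
  induction k generalizing x with
  | zero => exact ⟨x, hx, Nat.le_zero.1 hjk ▸ h⟩
  | succ k ih =>
    rcases hjk.eq_or_lt with rfl | hjk
    · exact ⟨x, hx, h⟩
    · obtain ⟨y, hy, hyk⟩ := hS.exists_hasExactLevel_of_succ hd hx h
      exact ih hy hyk (Nat.le_of_lt_succ hjk)

end IsStdPartition

/-- If `b/d^k ∈ S` for a standard `d`-adic partition `S`, with `b` not divisible by
`d`, then `S ∩ (0,1)` contains at least `k` elements. -/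
theorem stmt1 (d : ℕ) (hd : 2 ≤ d) (S : Finset ℝ) (hS : IsStdPartition d S)
    (b k : ℕ) (hb : ¬ d ∣ b) (hmem : (b : ℝ) / (d : ℝ) ^ k ∈ S) :
    k ≤ ((S : Set ℝ) ∩ Set.Ioo (0:ℝ) 1).ncard := by
  have hd₀ : 0 < d := by omega
  have hlevel : ∀ j ∈ Set.Icc 1 k, ∃ y ∈ S, HasExactLevel d j y := fun j hj =>
    hS.exists_hasExactLevel_of_le hd₀ hmem ⟨b, hb, rfl⟩ hj.2
  choose! f hfS hf using hlevel
  calc k = (Set.Icc 1 k).ncard := by simp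
    _ ≤ ((S : Set ℝ) ∩ Set.Ioo 0 1).ncard :=
      Set.ncard_le_ncard_of_injOn f
        (fun j hj => ⟨hfS j hj, (hf j hj).mem_Ioo hd₀ hj.1 (hS.2.2.1 _ (hfS j hj))⟩)
        (fun i hi j hj hij => (hf i hi).unique hd₀ (hij ▸ hf j hj))
        (S.finite_toSet.inter_of_left _)
end

section
/- Let d ≥ 2 be an integer and let S be a standard d-adic partition of [0,1]. If the open standard d-adic interval (c/d^l, (c+1)/d^l) (where l ≥ 0 and 0 ≤ c ≤ d^l − 1 are integers) contains an element of S, then (dc+n)/d^{l+1} ∈ S for at least one integer n with 1 ≤ n ≤ d − 1. -/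
/-- If the open standard `d`-adic interval `(c/d^l, (c+1)/d^l)` contains an element
of the standard `d`-adic partition `S`, then `(dc+n)/d^(l+1) ∈ S` for at least one
integer `n` with `1 ≤ n ≤ d - 1`. -/
theorem stmt2 (d : ℕ) (hd : 2 ≤ d) (S : Finset ℝ) (hS : IsStdPartition d S)
    (l c : ℕ) (hc : c + 1 ≤ d ^ l)
    (hmeet : ∃ s ∈ S, (c : ℝ) / (d : ℝ) ^ l < s ∧ s < ((c : ℝ) + 1) / (d : ℝ) ^ l) :
    ∃ n : ℕ, 1 ≤ n ∧ n ≤ d - 1 ∧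
      ((d : ℝ) * (c : ℝ) + (n : ℝ)) / (d : ℝ) ^ (l + 1) ∈ S := by
  obtain ⟨s, hsS, hs1, hs2⟩ := hmeet
  obtain ⟨h0S, h1S, hmem, hcons⟩ := hS
  have hd0 : (0:ℝ) < (d:ℝ) := by
    have : 0 < d := by omega
    exact_mod_cast this
  have hdl : (0:ℝ) < (d:ℝ)^l := pow_pos hd0 l
  have hdl1 : (0:ℝ) < (d:ℝ)^(l+1) := pow_pos hd0 (l+1)
  set p : ℝ := ((d:ℝ) * (c:ℝ) + 1) / (d:ℝ)^(l+1) with hp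
  have e1 : (c:ℝ)/(d:ℝ)^l = ((d:ℝ)*(c:ℝ))/(d:ℝ)^(l+1) := by
    rw [pow_succ]; field_simp
  have e2 : ((c:ℝ)+1)/(d:ℝ)^l = ((d:ℝ)*(c:ℝ)+(d:ℝ))/(d:ℝ)^(l+1) := by
    rw [pow_succ]; field_simp
  have hplow : (c:ℝ)/(d:ℝ)^l < p := by
    rw [e1, hp, div_lt_div_iff₀ hdl1 hdl1]
    nlinarith
  have hphigh : p < ((c:ℝ)+1)/(d:ℝ)^l := by
    rw [e2, hp, div_lt_div_iff₀ hdl1 hdl1]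
    have : (2:ℝ) ≤ (d:ℝ) := by exact_mod_cast hd
    nlinarith
  have hc0 : (0:ℝ) ≤ (c:ℝ)/(d:ℝ)^l := by positivity
  have hc1 : ((c:ℝ)+1)/(d:ℝ)^l ≤ 1 := by
    rw [div_le_one hdl]
    have : ((c:ℝ)+1) = ((c+1 : ℕ) : ℝ) := by push_cast; ring
    rw [this]
    exact_mod_cast Nat.cast_le.mpr hc |>.trans_eq (by push_cast; ring)
  have hp0 : (0:ℝ) < p := lt_of_le_of_lt hc0 hplow
  have hp1 : p < 1 := lt_of_lt_of_le hphigh hc1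
  -- It suffices to show p ∈ S (take n = 1)
  suffices hps : p ∈ S by
    exact ⟨1, le_refl 1, by omega, by push_cast; exact hps⟩
  by_contra hpS
  -- consecutive pair around p
  have hT1 : ((S.filter (fun z => z < p))).Nonempty :=
    ⟨0, Finset.mem_filter.mpr ⟨h0S, hp0⟩⟩
  have hT2 : ((S.filter (fun z => p < z))).Nonempty :=
    ⟨1, Finset.mem_filter.mpr ⟨h1S, hp1⟩⟩
  set x := (S.filter (fun z => z < p)).max' hT1 with hxdef
  set y := (S.filter (fun z => p < z)).min' hT2 with hydef
  have hxmem := Finset.max'_mem _ hT1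
  have hymem := Finset.min'_mem _ hT2
  rw [Finset.mem_filter] at hxmem hymem
  have hxS : x ∈ S := hxmem.1
  have hxp : x < p := hxmem.2
  have hyS : y ∈ S := hymem.1
  have hpy : p < y := hymem.2
  have hcp : ConsecPair S x y := by
    refine ⟨hxS, hyS, hxp.trans hpy, fun z hz => ?_⟩
    rcases lt_trichotomy z p with h | h | h
    · refine Or.inl (Finset.le_max' _ z ?_)
      simp only [Finset.mem_filter]
      exact ⟨hz, h⟩
    · exact absurd (h ▸ hz) hpS
    · refine Or.inr (Finset.min'_le _ z ?_)
      simp only [Finset.mem_filter]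
      exact ⟨hz, h⟩
  clear_value x y
  obtain ⟨k, a, ha, hx, hy⟩ := hcons x y hcp
  have hdk : (0:ℝ) < (d:ℝ)^k := pow_pos hd0 k
  -- integer inequalities
  have hA : a * d^(l+1) < (d*c+1) * d^k := by
    have := hxp
    rw [hx, hp, div_lt_div_iff₀ hdk hdl1] at this
    exact_mod_cast this
  have hB : (d*c+1) * d^k < (a+1) * d^(l+1) := by
    have := hpy
    rw [hy, hp, div_lt_div_iff₀ hdl1 hdk] at this
    have : ((d*c+1 : ℕ) : ℝ) * (d:ℝ)^k < ((a+1 : ℕ) : ℝ) * (d:ℝ)^(l+1) := by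
      push_cast; linarith
    exact_mod_cast this
  rcases le_or_gt (l+1) k with hk | hk
  · -- k ≥ l+1 : contradiction
    obtain ⟨m, rfl⟩ := Nat.exists_eq_add_of_le hk
    have hA' : a * d^(l+1) < ((d*c+1) * d^m) * d^(l+1) := by
      have : d^(l+1+m) = d^m * d^(l+1) := by ring
      rw [this] at hA; linarith [hA]
    have hB' : ((d*c+1) * d^m) * d^(l+1) < (a+1) * d^(l+1) := by
      have : d^(l+1+m) = d^m * d^(l+1) := by ring
      rw [this] at hB; linarith [hB]
    have h1 : a < (d*c+1) * d^m := lt_of_mul_lt_mul_right hA' (Nat.zero_le _)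
    have h2 : (d*c+1) * d^m < a+1 := lt_of_mul_lt_mul_right hB' (Nat.zero_le _)
    omega
  · -- k ≤ l
    have hkl : k ≤ l := by omega
    obtain ⟨m, rfl⟩ := Nat.exists_eq_add_of_le hkl
    have hpow : d^(k+m+1) = (d^m * d) * d^k := by ring
    have hA' : (a * (d^m * d)) * d^k < (d*c+1) * d^k := by
      rw [hpow] at hA; linarith [hA]
    have hB' : (d*c+1) * d^k < ((a+1) * (d^m * d)) * d^k := by
      rw [hpow] at hB; linarith [hB]
    have h1 : a * (d^m * d) < d*c+1 := lt_of_mul_lt_mul_right hA' (Nat.zero_le _)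
    have h2 : d*c+1 < (a+1) * (d^m * d) := lt_of_mul_lt_mul_right hB' (Nat.zero_le _)
    have h3 : a * d^m ≤ c := by
      have : a * d^m * d ≤ c * d := by nlinarith [h1]
      exact Nat.le_of_mul_le_mul_right this (by omega)
    have h4 : c + 1 ≤ (a+1) * d^m := by
      by_contra h
      push_neg at h
      have : (a+1) * d^m * d ≤ c * d := by
        have : (a+1) * d^m ≤ c := by omega
        exact Nat.mul_le_mul_right d this
      nlinarith [h2]
    -- translate back to reals : x ≤ c/d^l and (c+1)/d^l ≤ y
    have hxle : x ≤ (c:ℝ)/(d:ℝ)^(k+m) := by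
      rw [hx, div_le_div_iff₀ hdk hdl]
      have hn : a * d^(k+m) ≤ c * d^k := by
        have : a * d^(k+m) = a * d^m * d^k := by ring
        rw [this]
        exact Nat.mul_le_mul_right _ h3
      exact_mod_cast hn
    have hyge : ((c:ℝ)+1)/(d:ℝ)^(k+m) ≤ y := by
      rw [hy, div_le_div_iff₀ hdl hdk]
      have hn : (c+1) * d^k ≤ (a+1) * d^(k+m) := by
        have : (a+1) * d^(k+m) = (a+1) * d^m * d^k := by ring
        rw [this]
        exact Nat.mul_le_mul_right _ h4
      exact_mod_cast hn
    rcases hcp.2.2.2 s hsS with h | h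
    · exact absurd hs1 (not_lt.mpr (h.trans hxle))
    · exact absurd hs2 (not_lt.mpr (hyge.trans h))
end

section
/- Let d ≥ 2 be an integer and let g : [0,1) → [0,1) be a bijection for which there exist d-adic rationals 0 = t_0 < t_1 < ⋯ < t_m = 1 such that on each half-open interval [t_i, t_{i+1}) the map g is an increasing affine map whose slope is an integer power of d, and g(t_i) is a d-adic rational for each i < m. Then there exists a standard d-adic partition 0 = x_0 < x_1 < ⋯ < x_n = 1 such that g is standard affine on each half-open interval [x_i, x_{i+1}), and moreover the set {g(x_i) : 0 ≤ i ≤ n−1} ∪ {1} is again a standard d-adic partition. -/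
lemma aux_rescale (d a k K : ℕ) (hd : 0 < d) (h : k ≤ K) :
    (a:ℝ)/(d:ℝ)^k = ((a * d^(K-k) : ℕ):ℝ)/(d:ℝ)^K := by
  have hdR : (0:ℝ) < (d:ℝ) := by exact_mod_cast hd
  have h1 : ((d:ℝ))^k ≠ 0 := by positivity
  have h2 : ((d:ℝ))^K ≠ 0 := by positivity
  push_cast
  rw [div_eq_div_iff h1 h2, mul_assoc, ← pow_add,
    show K - k + k = K from Nat.sub_add_cancel h]

lemma aux_cover (D : ℕ) (hD : 0 < D) (s : ℝ) (h0 : 0 ≤ s) (h1 : s < 1) :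
    ∃ a : ℕ, a < D ∧ (a:ℝ)/(D:ℝ) ≤ s ∧ s < ((a:ℝ)+1)/(D:ℝ) := by
  have hDR : (0:ℝ) < (D:ℝ) := by exact_mod_cast hD
  have hnn : (0:ℤ) ≤ ⌊s * D⌋ := Int.floor_nonneg.2 (by positivity)
  have hcast : (((⌊s * D⌋).toNat : ℕ) : ℝ) = ((⌊s * D⌋ : ℤ) : ℝ) := by
    exact_mod_cast Int.toNat_of_nonneg hnn
  refine ⟨(⌊s * D⌋).toNat, ?_, ?_, ?_⟩
  · have h : ⌊s * D⌋ < D := Int.floor_lt.2 (by push_cast; nlinarith)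
    omega
  · rw [div_le_iff₀ hDR, hcast]
    exact Int.floor_le _
  · rw [lt_div_iff₀ hDR, hcast]
    have := Int.lt_floor_add_one (s * D)
    linarith



/-- `g` is standard affine on the half-open interval `[x, y)`: it is an increasing
affine map sending `[x, y)` onto some half-open standard `d`-adic interval
`[b/d^l, (b+1)/d^l)`. -/
def StdAffineOnI (d : ℕ) (g : ℝ → ℝ) (x y : ℝ) : Prop :=
  ∃ l b : ℕ, b + 1 ≤ d ^ l ∧
    ∀ t : ℝ, x ≤ t → t < y →
      g t = (b : ℝ) / (d : ℝ) ^ l + (((1 : ℝ) / (d : ℝ) ^ l) / (y - x)) * (t - x)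

/-- Let `g` be a bijection of `[0,1)` (encoded as a permutation of `ℝ` fixing the
complement of `[0,1)` pointwise) which is piecewise affine with respect to finitely
many `d`-adic breakpoints `0 = t₀ < ⋯ < t_m = 1`, increasing with slope an integer
power of `d` on each piece `[tᵢ, tᵢ₊₁)`, and sending each `tᵢ` (for `i < m`) to a
`d`-adic rational. Then there is a standard `d`-adic partition `0 = x₀ < ⋯ < x_n = 1`
such that `g` is standard affine on each `[xᵢ, xᵢ₊₁)`, and the set
`{g(xᵢ) : 0 ≤ i ≤ n-1} ∪ {1}` is again a standard `d`-adic partition. -/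
theorem stmt4 (d : ℕ) (hd : 2 ≤ d) (g : Equiv.Perm ℝ)
    (hfix : ∀ x : ℝ, x ∉ Set.Ico (0:ℝ) 1 → g x = x)
    (Q : Finset ℝ) (hQ0 : (0:ℝ) ∈ Q) (hQ1 : (1:ℝ) ∈ Q)
    (hQsub : ∀ x ∈ Q, (0:ℝ) ≤ x ∧ x ≤ 1)
    (hQdyadic : ∀ x ∈ Q, ∃ a k : ℕ, x = (a : ℝ) / (d : ℝ) ^ k)
    (hgQdyadic : ∀ x ∈ Q, x < 1 → ∃ a k : ℕ, g x = (a : ℝ) / (d : ℝ) ^ k)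
    (haff : ∀ x y : ℝ, ConsecPair Q x y →
      ∃ m : ℤ, ∀ t : ℝ, x ≤ t → t < y → g t = g x + (d : ℝ) ^ m * (t - x)) :
    ∃ P : Finset ℝ, IsStdPartition d P ∧
      (∀ x y : ℝ, ConsecPair P x y → StdAffineOnI d (⇑g) x y) ∧
      ∃ P' : Finset ℝ, IsStdPartition d P' ∧
        (P' : Set ℝ) = (⇑g) '' ((P : Set ℝ) \ {1}) ∪ {1} := by
  classical
  have hd0 : 0 < d := by omega
  have hdR : (0:ℝ) < (d:ℝ) := by exact_mod_cast hd0
  -- common denominator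
  choose A1 k1 h1 using hQdyadic
  choose A2 k2 h2 using hgQdyadic
  set K0 : ℕ := Q.attach.sup (fun x => max (k1 x.1 x.2)
      (if h : x.1 < 1 then k2 x.1 x.2 h else 0)) with hK0def
  have fact1 : ∀ x (hx : x ∈ Q), ∃ e : ℕ, x = (e:ℝ)/(d:ℝ)^K0 := by
    intro x hx
    have hk : k1 x hx ≤ K0 := by
      rw [hK0def]
      exact le_trans (le_max_left _ _)
        (Finset.le_sup (f := fun x => k1 x.1 x.2 ⊔ if h : x.1 < 1 then k2 x.1 x.2 h else 0)
          (Finset.mem_attach Q ⟨x, hx⟩))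
    exact ⟨A1 x hx * d^(K0 - k1 x hx), (h1 x hx).trans (aux_rescale d _ _ K0 hd0 hk)⟩
  have fact2 : ∀ x (hx : x ∈ Q), x < 1 → ∃ c : ℕ, g x = (c:ℝ)/(d:ℝ)^K0 := by
    intro x hx hlt
    have hk : k2 x hx hlt ≤ K0 := by
      rw [hK0def]
      refine le_trans ?_
        (Finset.le_sup (f := fun x => k1 x.1 x.2 ⊔ if h : x.1 < 1 then k2 x.1 x.2 h else 0)
          (Finset.mem_attach Q ⟨x, hx⟩))
      rw [dif_pos hlt]
      exact le_max_right _ _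
    exact ⟨A2 x hx hlt * d^(K0 - k2 x hx hlt), (h2 x hx hlt).trans (aux_rescale d _ _ K0 hd0 hk)⟩
  -- slopes
  have haff' : ∀ x y : ℝ, ∃ m : ℤ, ConsecPair Q x y →
      ∀ t : ℝ, x ≤ t → t < y → g t = g x + (d:ℝ)^m * (t-x) := by
    intro x y
    by_cases h : ConsecPair Q x y
    · obtain ⟨m, hm⟩ := haff x y h; exact ⟨m, fun _ => hm⟩
    · exact ⟨0, fun h' => absurd h' h⟩
  choose sl hsl using haff'
  set M : ℕ := (Q ×ˢ Q).sup (fun p => (sl p.1 p.2).toNat) with hMdef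
  have hslM : ∀ x ∈ Q, ∀ y ∈ Q, sl x y ≤ (M:ℤ) := by
    intro x hx y hy
    have h1 : (sl x y).toNat ≤ M := by
      rw [hMdef]
      exact Finset.le_sup (f := fun p => (sl p.1 p.2).toNat)
        (show (x, y) ∈ Q ×ˢ Q from Finset.mem_product.2 ⟨hx, hy⟩)
    have := Int.self_le_toNat (sl x y)
    exact le_trans this (by exact_mod_cast h1)
  set K : ℕ := K0 + M with hKdef
  have hK0K : K0 ≤ K := by omega
  have hp : (0:ℝ) < (d:ℝ)^K := by positivity
  have hp0 : (0:ℝ) < (d:ℝ)^K0 := by positivity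
  have hdKcast : ((d^K : ℕ):ℝ) = (d:ℝ)^K := by push_cast; ring
  have gmem : ∀ t : ℝ, 0 ≤ t → t < 1 → 0 ≤ g t ∧ g t < 1 := by
    intro t h0 h1
    by_contra h
    have hg : g t ∉ Set.Ico (0:ℝ) 1 := by simp only [Set.mem_Ico]; tauto
    have h3 : g t = t := g.injective (hfix _ hg)
    rw [h3] at hg
    exact hg ⟨h0, h1⟩
  -- the main per-interval analysis
  have main : ∀ a : ℕ, ∃ l N : ℕ, a < d^K →
      (N + 1 ≤ d^l ∧ ∀ t : ℝ, (a:ℝ)/(d:ℝ)^K ≤ t → t < ((a:ℝ)+1)/(d:ℝ)^K →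
        g t = (N:ℝ)/(d:ℝ)^l + ((d:ℝ)^K/(d:ℝ)^l) * (t - (a:ℝ)/(d:ℝ)^K)) := by
    intro a
    by_cases ha : a < d^K
    swap
    · exact ⟨0, 0, fun h => absurd h ha⟩
    set s0 : ℝ := (a:ℝ)/(d:ℝ)^K with hs0def
    set s1 : ℝ := ((a:ℝ)+1)/(d:ℝ)^K with hs1def
    have hs00 : 0 ≤ s0 := by positivity
    have hs0s1 : s0 < s1 := by
      rw [hs0def, hs1def, div_lt_div_iff_of_pos_right hp]
      linarith
    have haK : (a:ℝ) + 1 ≤ (d:ℝ)^K := by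
      rw [← hdKcast]
      exact_mod_cast ha
    have hs11 : s1 ≤ 1 := by
      rw [hs1def, div_le_one hp]
      exact haK
    have hs01 : s0 < 1 := lt_of_lt_of_le hs0s1 hs11
    -- the breakpoints surrounding [s0, s1)
    have hne1 : (Q.filter (fun z => z ≤ s0)).Nonempty :=
      ⟨0, Finset.mem_filter.2 ⟨hQ0, hs00⟩⟩
    have hne2 : (Q.filter (fun z => s0 < z)).Nonempty :=
      ⟨1, Finset.mem_filter.2 ⟨hQ1, hs01⟩⟩
    set x : ℝ := (Q.filter (fun z => z ≤ s0)).max' hne1 with hxdef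
    set y : ℝ := (Q.filter (fun z => s0 < z)).min' hne2 with hydef
    have hxmem := Finset.mem_filter.1 ((Q.filter (fun z => z ≤ s0)).max'_mem hne1)
    have hymem := Finset.mem_filter.1 ((Q.filter (fun z => s0 < z)).min'_mem hne2)
    have hxQ : x ∈ Q := hxmem.1
    have hyQ : y ∈ Q := hymem.1
    have hxle : x ≤ s0 := hxmem.2
    have hygt : s0 < y := hymem.2
    have hcp : ConsecPair Q x y := by
      refine ⟨hxQ, hyQ, lt_of_le_of_lt hxle hygt, fun z hz => ?_⟩
      rcases le_or_gt z s0 with h | h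
      · left
        rw [hxdef]
        exact Finset.le_max' (Q.filter (fun w => w ≤ s0)) z (Finset.mem_filter.2 ⟨hz, h⟩)
      · right
        rw [hydef]
        exact Finset.min'_le (Q.filter (fun w => s0 < w)) z (Finset.mem_filter.2 ⟨hz, h⟩)
    have hy1 : y ≤ 1 := (hQsub y hyQ).2
    have hx1 : x < 1 := lt_of_le_of_lt hxle hs01
    -- y is at least s1
    obtain ⟨ey, hey⟩ := fact1 y hyQ
    have hs1y : s1 ≤ y := by
      have h1 : y = ((ey * d^(K - K0) : ℕ):ℝ)/(d:ℝ)^K := hey.trans (aux_rescale d _ _ K hd0 hK0K)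
      have h2 : (a:ℝ) < ((ey * d^(K - K0) : ℕ):ℝ) := by
        rw [h1] at hygt
        rw [hs0def] at hygt
        exact (div_lt_div_iff_of_pos_right hp).1 hygt
      have h3 : a < ey * d^(K - K0) := by exact_mod_cast h2
      have h4 : (a:ℝ) + 1 ≤ ((ey * d^(K - K0) : ℕ):ℝ) := by exact_mod_cast h3
      rw [h1, hs1def]
      exact (div_le_div_iff_of_pos_right hp).2 h4
    -- data at x
    obtain ⟨e, he⟩ := fact1 x hxQ
    obtain ⟨c, hc⟩ := fact2 x hxQ hx1
    set m : ℤ := sl x y with hmdef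
    have hmform := hsl x y hcp
    have hmM : m ≤ (M:ℤ) := hslM x hxQ y hyQ
    set l : ℕ := ((K:ℤ) - m).toNat with hldef
    have hlz : (l:ℤ) = (K:ℤ) - m := by
      rw [hldef]
      refine Int.toNat_of_nonneg ?_
      have hMK : M ≤ K := by omega
      have : (M:ℤ) ≤ (K:ℤ) := by exact_mod_cast hMK
      omega
    have hK0l : K0 ≤ l := by
      have h1 : (K:ℤ) = (K0:ℤ) + (M:ℤ) := by exact_mod_cast hKdef
      have h2 : (K0:ℤ) ≤ (l:ℤ) := by omega
      exact_mod_cast h2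
    have hpl : (0:ℝ) < (d:ℝ)^l := by positivity
    have hdne : (d:ℝ) ≠ 0 := ne_of_gt hdR
    have hdm : (d:ℝ)^m = (d:ℝ)^K / (d:ℝ)^l := by
      rw [show m = (K:ℤ) - (l:ℤ) by omega, zpow_sub₀ hdne, zpow_natCast, zpow_natCast]
    have hgt : ∀ t : ℝ, x ≤ t → t < y →
        g t = (c:ℝ)/(d:ℝ)^K0 + ((d:ℝ)^K/(d:ℝ)^l) * (t - x) := by
      intro t ht1 ht2
      rw [hmform t ht1 ht2, hc, hdm]
    have hgs0 : g s0 = (c:ℝ)/(d:ℝ)^K0 + ((d:ℝ)^K/(d:ℝ)^l) * (s0 - x) := hgt s0 hxle hygt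
    set Nz : ℤ := (c : ℤ) * (d:ℤ)^(l - K0) + a - (e:ℤ) * (d:ℤ)^(K - K0) with hNzdef
    have hNzR : (Nz:ℝ) = (c:ℝ)*(d:ℝ)^(l-K0) + (a:ℝ) - (e:ℝ)*(d:ℝ)^(K-K0) := by
      rw [hNzdef]; push_cast; ring
    have hNval : (Nz:ℝ)/(d:ℝ)^l = g s0 := by
      rw [hgs0, hNzR, he, hs0def]
      have e1 : (d:ℝ)^l = (d:ℝ)^K0 * (d:ℝ)^(l - K0) := by
        rw [← pow_add, Nat.add_sub_cancel' hK0l]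
      have e2 : (d:ℝ)^K = (d:ℝ)^K0 * (d:ℝ)^(K - K0) := by
        rw [← pow_add, Nat.add_sub_cancel' hK0K]
      have n1 : (d:ℝ)^K0 ≠ 0 := ne_of_gt hp0
      have n2 : (d:ℝ)^(l-K0) ≠ 0 := by positivity
      have n3 : (d:ℝ)^(K-K0) ≠ 0 := by positivity
      rw [e1, e2]
      field_simp
      ring
    have hgs0mem := gmem s0 hs00 hs01
    have hNz0 : 0 ≤ Nz := by
      have h1 : (0:ℝ) ≤ (Nz:ℝ) := by
        have h2 := hgs0mem.1
        rw [← hNval] at h2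
        rcases div_nonneg_iff.1 h2 with ⟨h4, _⟩ | ⟨_, h4⟩
        · exact h4
        · linarith
      exact_mod_cast h1
    set N : ℕ := Nz.toNat with hNdef
    have hNR : ((N:ℕ):ℝ) = (Nz:ℝ) := by exact_mod_cast Int.toNat_of_nonneg hNz0
    have hNval' : ((N:ℕ):ℝ)/(d:ℝ)^l = g s0 := by rw [hNR]; exact hNval
    refine ⟨l, N, fun _ => ⟨?_, ?_⟩⟩
    · have h1 : ((N:ℕ):ℝ) < (d:ℝ)^l := by
        have h2 := hgs0mem.2
        rw [← hNval'] at h2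
        exact (div_lt_one hpl).1 h2
      have h2 : N < d^l := by exact_mod_cast h1
      omega
    · intro t ht0 ht1
      have hxt : x ≤ t := le_trans hxle ht0
      have hty : t < y := lt_of_lt_of_le ht1 hs1y
      have hh1 := hgt t hxt hty
      have hh2 := hNval'
      rw [hgs0] at hh2
      linear_combination hh1 - hh2

  choose L N hLN using main
  have hform : ∀ a : ℕ, a < d^K → ∀ t : ℝ, (a:ℝ)/(d:ℝ)^K ≤ t → t < ((a:ℝ)+1)/(d:ℝ)^K →
      g t = ((N a:ℕ):ℝ)/(d:ℝ)^(L a) + ((d:ℝ)^K/(d:ℝ)^(L a)) * (t - (a:ℝ)/(d:ℝ)^K) :=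
    fun a ha => (hLN a ha).2
  have hbound : ∀ a : ℕ, a < d^K → N a + 1 ≤ d^(L a) := fun a ha => (hLN a ha).1
  have hplL : ∀ a : ℕ, (0:ℝ) < (d:ℝ)^(L a) := fun a => by positivity
  have hsplit : ∀ a : ℕ, (a:ℝ)/(d:ℝ)^K < ((a:ℝ)+1)/(d:ℝ)^K := fun a => by
    rw [div_lt_div_iff_of_pos_right hp]; linarith
  have hval : ∀ a : ℕ, a < d^K → g ((a:ℝ)/(d:ℝ)^K) = ((N a:ℕ):ℝ)/(d:ℝ)^(L a) := by
    intro a ha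
    have h := hform a ha ((a:ℝ)/(d:ℝ)^K) le_rfl (hsplit a)
    rw [h]; ring
  have gsymm_mem : ∀ w : ℝ, 0 ≤ w → w < 1 → 0 ≤ g.symm w ∧ g.symm w < 1 := by
    intro w h0 h1
    by_contra h
    have hg : g.symm w ∉ Set.Ico (0:ℝ) 1 := by simp only [Set.mem_Ico]; tauto
    have h2 : g (g.symm w) = g.symm w := hfix _ hg
    rw [g.apply_symm_apply] at h2
    rw [← h2] at hg
    exact hg ⟨h0, h1⟩
  have cover : ∀ s : ℝ, 0 ≤ s → s < 1 →
      ∃ a : ℕ, a < d^K ∧ (a:ℝ)/(d:ℝ)^K ≤ s ∧ s < ((a:ℝ)+1)/(d:ℝ)^K := by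
    intro s h0 h1
    obtain ⟨a, ha, h2, h3⟩ := aux_cover (d^K) (pow_pos hd0 K) s h0 h1
    rw [hdKcast] at h2 h3
    exact ⟨a, ha, h2, h3⟩
  have tile_of_mem : ∀ b : ℕ, b < d^K → ∀ s : ℝ, (b:ℝ)/(d:ℝ)^K ≤ s → s < ((b:ℝ)+1)/(d:ℝ)^K →
      ((N b:ℕ):ℝ)/(d:ℝ)^(L b) ≤ g s ∧ g s < (((N b:ℕ):ℝ)+1)/(d:ℝ)^(L b) := by
    intro b hb s hs1 hs2
    have hf := hform b hb s hs1 hs2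
    have hS : (0:ℝ) < (d:ℝ)^K/(d:ℝ)^(L b) := by positivity
    constructor
    · rw [hf]
      nlinarith [mul_nonneg hS.le (sub_nonneg.2 hs1)]
    · rw [hf]
      have h3 : s - (b:ℝ)/(d:ℝ)^K < 1/(d:ℝ)^K := by
        have h6 : ((b:ℝ)+1)/(d:ℝ)^K = (b:ℝ)/(d:ℝ)^K + 1/(d:ℝ)^K := by ring
        rw [h6] at hs2
        linarith
      have h4 := mul_lt_mul_of_pos_left h3 hS
      have h5 : ((d:ℝ)^K/(d:ℝ)^(L b))*(1/(d:ℝ)^K) = 1/(d:ℝ)^(L b) := by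
        field_simp
      rw [h5] at h4
      have h6 : (((N b:ℕ):ℝ)+1)/(d:ℝ)^(L b) = ((N b:ℕ):ℝ)/(d:ℝ)^(L b) + 1/(d:ℝ)^(L b) := by
        ring
      rw [h6]
      linarith
  have tile_to_int : ∀ b : ℕ, b < d^K → ∀ w : ℝ,
      ((N b:ℕ):ℝ)/(d:ℝ)^(L b) ≤ w → w < (((N b:ℕ):ℝ)+1)/(d:ℝ)^(L b) →
      (b:ℝ)/(d:ℝ)^K ≤ g.symm w ∧ g.symm w < ((b:ℝ)+1)/(d:ℝ)^K := by
    intro b hb w hw1 hw2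
    set t : ℝ := (b:ℝ)/(d:ℝ)^K + ((d:ℝ)^(L b)/(d:ℝ)^K) * (w - ((N b:ℕ):ℝ)/(d:ℝ)^(L b))
      with htdef
    have hSp : (0:ℝ) < (d:ℝ)^(L b)/(d:ℝ)^K := by positivity
    have h0 : (b:ℝ)/(d:ℝ)^K ≤ t := by
      rw [htdef]
      nlinarith [mul_nonneg hSp.le (sub_nonneg.2 hw1)]
    have hwlt : w - ((N b:ℕ):ℝ)/(d:ℝ)^(L b) < 1/(d:ℝ)^(L b) := by
      have h6 : (((N b:ℕ):ℝ)+1)/(d:ℝ)^(L b) = ((N b:ℕ):ℝ)/(d:ℝ)^(L b) + 1/(d:ℝ)^(L b) := by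
        ring
      rw [h6] at hw2
      linarith
    have h1 : t < ((b:ℝ)+1)/(d:ℝ)^K := by
      have h4 := mul_lt_mul_of_pos_left hwlt hSp
      have h5 : ((d:ℝ)^(L b)/(d:ℝ)^K)*(1/(d:ℝ)^(L b)) = 1/(d:ℝ)^K := by
        field_simp
      rw [h5] at h4
      have h6 : ((b:ℝ)+1)/(d:ℝ)^K = (b:ℝ)/(d:ℝ)^K + 1/(d:ℝ)^K := by ring
      rw [h6, htdef]
      linarith
    have hgt : g t = w := by
      rw [hform b hb t h0 h1, htdef]
      field_simp
      ring
    have hsymm : g.symm w = t := (Equiv.symm_apply_eq g).2 hgt.symm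
    rw [hsymm]
    exact ⟨h0, h1⟩
  have int_inj : ∀ a b : ℕ, ∀ t : ℝ, (a:ℝ)/(d:ℝ)^K ≤ t → t < ((a:ℝ)+1)/(d:ℝ)^K →
      (b:ℝ)/(d:ℝ)^K ≤ t → t < ((b:ℝ)+1)/(d:ℝ)^K → a = b := by
    intro a b t ha1 ha2 hb1 hb2
    have h1 : (a:ℝ) < (b:ℝ)+1 := (div_lt_div_iff_of_pos_right hp).1 (lt_of_le_of_lt ha1 hb2)
    have h2 : (b:ℝ) < (a:ℝ)+1 := (div_lt_div_iff_of_pos_right hp).1 (lt_of_le_of_lt hb1 ha2)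
    have h3 : a < b+1 := by exact_mod_cast h1
    have h4 : b < a+1 := by exact_mod_cast h2
    omega
  have tiles_inj : ∀ a b : ℕ, a < d^K → b < d^K → ∀ w : ℝ,
      ((N a:ℕ):ℝ)/(d:ℝ)^(L a) ≤ w → w < (((N a:ℕ):ℝ)+1)/(d:ℝ)^(L a) →
      ((N b:ℕ):ℝ)/(d:ℝ)^(L b) ≤ w → w < (((N b:ℕ):ℝ)+1)/(d:ℝ)^(L b) → a = b := by
    intro a b ha hb w h1 h2 h3 h4
    obtain ⟨p1, p2⟩ := tile_to_int a ha w h1 h2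
    obtain ⟨q1, q2⟩ := tile_to_int b hb w h3 h4
    exact int_inj a b (g.symm w) p1 p2 q1 q2
  -- the partition P
  set P : Finset ℝ := (Finset.range (d^K + 1)).image (fun a : ℕ => (a:ℝ)/(d:ℝ)^K) with hPdef
  have memP : ∀ x : ℝ, x ∈ P ↔ ∃ a : ℕ, a ≤ d^K ∧ x = (a:ℝ)/(d:ℝ)^K := by
    intro x
    rw [hPdef]
    simp only [Finset.mem_image, Finset.mem_range, Nat.lt_succ_iff]
    constructor
    · rintro ⟨a, ha, h⟩; exact ⟨a, ha, h.symm⟩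
    · rintro ⟨a, ha, h⟩; exact ⟨a, ha, h.symm⟩
  have hone : ((d^K:ℕ):ℝ)/(d:ℝ)^K = 1 := by rw [hdKcast]; exact div_self (ne_of_gt hp)
  have hlt1 : ∀ a : ℕ, a < d^K → (a:ℝ)/(d:ℝ)^K < 1 := by
    intro a ha
    rw [div_lt_one hp, ← hdKcast]
    exact_mod_cast ha
  have consecP : ∀ x y : ℝ, ConsecPair P x y →
      ∃ a : ℕ, a < d^K ∧ x = (a:ℝ)/(d:ℝ)^K ∧ y = ((a:ℝ)+1)/(d:ℝ)^K := by
    rintro x y ⟨hxP, hyP, hxy, hcons⟩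
    obtain ⟨a, ha, rfl⟩ := (memP x).1 hxP
    obtain ⟨b, hb, rfl⟩ := (memP y).1 hyP
    have hab : a < b := by
      have h := (div_lt_div_iff_of_pos_right hp).1 hxy
      exact_mod_cast h
    have ha' : a + 1 ≤ d^K := by omega
    have hz : ((a+1:ℕ):ℝ)/(d:ℝ)^K ∈ P := (memP _).2 ⟨a+1, ha', rfl⟩
    rcases hcons _ hz with h | h
    · exfalso
      have h1 : ((a+1:ℕ):ℝ) ≤ (a:ℝ) := (div_le_div_iff_of_pos_right hp).1 h
      have h2 : a+1 ≤ a := by exact_mod_cast h1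
      omega
    · have h1 : (b:ℝ) ≤ ((a+1:ℕ):ℝ) := (div_le_div_iff_of_pos_right hp).1 h
      have h2 : b ≤ a + 1 := by exact_mod_cast h1
      have hba : b = a+1 := by omega
      refine ⟨a, by omega, rfl, ?_⟩
      rw [hba]
      push_cast
      ring
  -- P is a standard partition
  have hPstd : IsStdPartition d P := by
    refine ⟨?_, ?_, ?_, ?_⟩
    · refine (memP 0).2 ⟨0, Nat.zero_le _, ?_⟩
      simp
    · exact (memP 1).2 ⟨d^K, le_rfl, hone.symm⟩
    · intro x hx
      obtain ⟨a, ha, rfl⟩ := (memP x).1 hx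
      constructor
      · positivity
      · rw [div_le_one hp, ← hdKcast]
        exact_mod_cast ha
    · intro x y hc
      obtain ⟨a, ha, hx, hy⟩ := consecP x y hc
      exact ⟨K, a, by omega, hx, hy⟩
  -- g is standard affine on each piece of P
  have hPaff : ∀ x y : ℝ, ConsecPair P x y → StdAffineOnI d (⇑g) x y := by
    intro x y hc
    obtain ⟨a, ha, rfl, rfl⟩ := consecP x y hc
    refine ⟨L a, N a, hbound a ha, ?_⟩
    intro t ht1 ht2
    rw [hform a ha t ht1 ht2]
    have h5 : ((a:ℝ)+1)/(d:ℝ)^K - (a:ℝ)/(d:ℝ)^K = 1/(d:ℝ)^K := by ring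
    rw [h5]
    have h6 : ((1:ℝ)/(d:ℝ)^(L a))/((1:ℝ)/(d:ℝ)^K) = (d:ℝ)^K/(d:ℝ)^(L a) := by
      field_simp
    rw [h6]
  -- the image partition P'
  set P' : Finset ℝ := ((P.erase 1).image (⇑g)) ∪ {1} with hP'def
  have memErase : ∀ x : ℝ, x ∈ P.erase 1 ↔ ∃ a : ℕ, a < d^K ∧ x = (a:ℝ)/(d:ℝ)^K := by
    intro x
    rw [Finset.mem_erase]
    constructor
    · rintro ⟨hne, hxP⟩
      obtain ⟨a, ha, rfl⟩ := (memP _).1 hxP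
      refine ⟨a, ?_, rfl⟩
      rcases lt_or_eq_of_le ha with h | h
      · exact h
      · exact absurd (by rw [h]; exact hone) hne
    · rintro ⟨a, ha, rfl⟩
      exact ⟨ne_of_lt (hlt1 a ha), (memP _).2 ⟨a, le_of_lt ha, rfl⟩⟩
  have memP' : ∀ x : ℝ, x ∈ P' ↔ x = 1 ∨ ∃ a : ℕ, a < d^K ∧ x = ((N a:ℕ):ℝ)/(d:ℝ)^(L a) := by
    intro x
    rw [hP'def, Finset.mem_union, Finset.mem_singleton]
    constructor
    · rintro (h | h)
      · rw [Finset.mem_image] at h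
        obtain ⟨t, ht, rfl⟩ := h
        obtain ⟨a, ha, rfl⟩ := (memErase t).1 ht
        exact Or.inr ⟨a, ha, hval a ha⟩
      · exact Or.inl h
    · rintro (h | ⟨a, ha, rfl⟩)
      · exact Or.inr h
      · left
        rw [Finset.mem_image]
        exact ⟨(a:ℝ)/(d:ℝ)^K, (memErase _).2 ⟨a, ha, rfl⟩, hval a ha⟩
  have hP'bounds : ∀ x ∈ P', (0:ℝ) ≤ x ∧ x ≤ 1 := by
    intro x hx
    rcases (memP' x).1 hx with h | ⟨a, ha, rfl⟩
    · rw [h]; exact ⟨zero_le_one, le_rfl⟩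
    · have h1 := gmem ((a:ℝ)/(d:ℝ)^K) (by positivity) (hlt1 a ha)
      rw [hval a ha] at h1
      exact ⟨h1.1, h1.2.le⟩
  have hP'std : IsStdPartition d P' := by
    refine ⟨?_, ?_, hP'bounds, ?_⟩
    · -- 0 ∈ P'
      have h0s := gsymm_mem 0 le_rfl one_pos
      obtain ⟨a, ha, h1, h2⟩ := cover (g.symm 0) h0s.1 h0s.2
      have hg0 : g (g.symm 0) = 0 := g.apply_symm_apply 0
      have ht := tile_of_mem a ha (g.symm 0) h1 h2
      rw [hg0] at ht
      have hN0 : ((N a:ℕ):ℝ)/(d:ℝ)^(L a) = 0 := le_antisymm ht.1 (by positivity)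
      exact (memP' 0).2 (Or.inr ⟨a, ha, hN0.symm⟩)
    · exact (memP' 1).2 (Or.inl rfl)
    · rintro u v ⟨huP, hvP, huv, hcons⟩
      have hvle1 : v ≤ 1 := (hP'bounds v hvP).2
      have hu1 : u < 1 := lt_of_lt_of_le huv hvle1
      rcases (memP' u).1 huP with h | ⟨a, ha, hu⟩
      · exact absurd h (ne_of_lt hu1)
      have hN1 := hbound a ha
      set w : ℝ := (((N a:ℕ):ℝ)+1)/(d:ℝ)^(L a) with hwdef
      have huw : u < w := by
        rw [hu, hwdef]
        exact (div_lt_div_iff_of_pos_right (hplL a)).2 (by linarith)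
      have hwle1 : w ≤ 1 := by
        rw [hwdef, div_le_one (hplL a)]
        have h9 : ((N a + 1:ℕ):ℝ) ≤ ((d^(L a):ℕ):ℝ) := by exact_mod_cast hN1
        push_cast at h9
        linarith
      have hwP' : w ∈ P' := by
        by_cases hw1 : w = 1
        · exact (memP' w).2 (Or.inl hw1)
        have hwlt1 : w < 1 := lt_of_le_of_ne hwle1 hw1
        have hw0 : (0:ℝ) ≤ w := by rw [hwdef]; positivity
        have hs := gsymm_mem w hw0 hwlt1
        obtain ⟨b, hb, hb1, hb2⟩ := cover (g.symm w) hs.1 hs.2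
        have hgw : g (g.symm w) = w := g.apply_symm_apply w
        have htw := tile_of_mem b hb (g.symm w) hb1 hb2
        rw [hgw] at htw
        have hLbw : ((N b:ℕ):ℝ)/(d:ℝ)^(L b) = w := by
          by_contra hne
          have hlt : ((N b:ℕ):ℝ)/(d:ℝ)^(L b) < w := lt_of_le_of_ne htw.1 hne
          have hLbRb : ((N b:ℕ):ℝ)/(d:ℝ)^(L b) < (((N b:ℕ):ℝ)+1)/(d:ℝ)^(L b) :=
            (div_lt_div_iff_of_pos_right (hplL b)).2 (by linarith)
          rcases le_or_gt u (((N b:ℕ):ℝ)/(d:ℝ)^(L b)) with hc | hc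
          · have hab : a = b := by
              refine tiles_inj a b ha hb (((N b:ℕ):ℝ)/(d:ℝ)^(L b)) ?_ ?_ le_rfl hLbRb
              · rw [← hu]; exact hc
              · rw [← hwdef]; exact hlt
            rw [hab] at hwdef
            rw [← hwdef] at htw
            exact absurd htw.2 (lt_irrefl w)
          · have hab : a = b := by
              refine tiles_inj a b ha hb u ?_ ?_ hc.le (lt_trans huw htw.2)
              · rw [← hu]
              · rw [← hwdef]; exact huw
            rw [hab] at hu
            rw [hu] at hc
            exact absurd hc (lt_irrefl _)
        exact (memP' w).2 (Or.inr ⟨b, hb, hLbw.symm⟩)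
      rcases hcons w hwP' with h | h
      · exact absurd (lt_of_lt_of_le huw h) (lt_irrefl u)
      have hvw : v = w := by
        by_contra hne
        have hvltw : v < w := lt_of_le_of_ne h hne
        have hv1 : v < 1 := lt_of_lt_of_le hvltw hwle1
        rcases (memP' v).1 hvP with h1 | ⟨c, hc2, hv⟩
        · exact absurd h1 (ne_of_lt hv1)
        have hsv : g.symm v = (c:ℝ)/(d:ℝ)^K := by
          rw [hv, ← hval c hc2]
          exact g.symm_apply_apply _
        have p12 := tile_to_int a ha v (by rw [← hu]; exact huv.le) (by rw [← hwdef]; exact hvltw)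
        rw [hsv] at p12
        have hac : a = c := int_inj a c ((c:ℝ)/(d:ℝ)^K) p12.1 p12.2 le_rfl (hsplit c)
        rw [← hac] at hv
        rw [← hu] at hv
        rw [hv] at huv
        exact absurd huv (lt_irrefl u)
      exact ⟨L a, N a, hN1, hu, by rw [hvw, hwdef]⟩
  refine ⟨P, hPstd, hPaff, P', hP'std, ?_⟩
  rw [hP'def]
  simp [Finset.coe_union, Finset.coe_image, Finset.coe_erase]
end
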